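/- Let A = A₀ ⊕ A₁ be a 3-dimensional Novikov superalgebra over ℂ of type S (not a Novikov algebra with grading forgotten). Then dim A₁ = 2. -/

import Mathlib

/-- A Novikov superalgebra over ℂ: a ℤ₂-graded vector space `V = A 0 ⊕ A 1`
with a bilinear product respecting the grading, satisfying the graded
left-symmetry and graded right-commutativity identities. -/
structure NovikovSuperAlgebra (V : Type*) [AddCommGroup V] [Module ℂ V] where
  mul : V →ₗ[ℂ] V →ₗ[ℂ] V
  grading : ZMod 2 → Submodule ℂ V
  spanning : ∀ x : V, ∃ x0 ∈ grading 0, ∃ x1 ∈ grading 1, x = x0 + x1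
  indep : ∀ x : V, x ∈ grading 0 → x ∈ grading 1 → x = 0
  mul_mem : ∀ i j : ZMod 2, ∀ u ∈ grading i, ∀ v ∈ grading j, mul u v ∈ grading (i + j)
  super_left_sym : ∀ i j : ZMod 2, ∀ u ∈ grading i, ∀ v ∈ grading j, ∀ w : V,
    mul (mul u v) w - mul u (mul v w)
      = ((-1 : ℂ) ^ (i.val * j.val)) • (mul (mul v u) w - mul v (mul u w))
  super_right_comm : ∀ i j : ZMod 2, ∀ u ∈ grading i, ∀ v ∈ grading j, ∀ w : V,
    mul (mul w u) v = ((-1 : ℂ) ^ (i.val * j.val)) • mul (mul w v) u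

/-- The (ungraded) Novikov algebra identities for a bilinear product. -/
def IsNovikovMul {V : Type*} [AddCommGroup V] [Module ℂ V]
    (mul : V →ₗ[ℂ] V →ₗ[ℂ] V) : Prop :=
  (∀ x y z : V, mul (mul x y) z - mul x (mul y z) = mul (mul y x) z - mul y (mul x z)) ∧
  (∀ x y z : V, mul (mul z x) y = mul (mul z y) x)

/-- Supercommutator of elements of parities `i`, `j`. -/
def sbr {V : Type*} [AddCommGroup V] [Module ℂ V]
    (mul : V →ₗ[ℂ] V →ₗ[ℂ] V) (i j : ZMod 2) (u v : V) : V :=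
  mul u v - ((-1 : ℂ) ^ (i.val * j.val)) • mul v u

/-!
Both Novikov identities say that a bilinear map in two of the arguments is symmetric, and
their graded versions say that it is supersymmetric on homogeneous elements. The two notions
differ only on pairs of odd elements; if `dim A₁ ≤ 1` such elements are proportional, so the
graded identities imply the ungraded ones. If `dim A₁ = 3`, then `A₀ = 0` and
`A₁ A₁ ⊆ A₀` forces the product to vanish.
-/

open Module

theorem LinearMap.apply_comm_of_mem_of_finrank_le_one {K V W : Type*} [Field K]
    [AddCommGroup V] [Module K V] [AddCommGroup W] [Module K W]
    (B : V →ₗ[K] V →ₗ[K] W) {p : Submodule K V} [FiniteDimensional K p]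
    (hp : finrank K p ≤ 1) {u v : V} (hu : u ∈ p) (hv : v ∈ p) : B u v = B v u := by
  obtain ⟨g, hg⟩ := finrank_le_one_iff.mp hp
  obtain ⟨a, ha⟩ := hg ⟨u, hu⟩
  obtain ⟨b, hb⟩ := hg ⟨v, hv⟩
  have hu' : a • (g : V) = u := by simpa using congrArg Subtype.val ha
  have hv' : b • (g : V) = v := by simpa using congrArg Subtype.val hb
  rw [← hu', ← hv']
  simp only [map_smul, LinearMap.smul_apply, smul_comm a b]

theorem ZMod.neg_one_pow_val_mul_val_eq_one {R : Type*} [Ring R] {i j : ZMod 2}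
    (hij : ¬(i = 1 ∧ j = 1)) : (-1 : R) ^ (i.val * j.val) = 1 := by
  fin_cases i <;> fin_cases j <;> first | exact (hij ⟨rfl, rfl⟩).elim | simp [ZMod.val]

theorem isNovikovMul_zero {V : Type*} [AddCommGroup V] [Module ℂ V] :
    IsNovikovMul (0 : V →ₗ[ℂ] V →ₗ[ℂ] V) :=
  ⟨fun _ _ _ => rfl, fun _ _ _ => rfl⟩

namespace NovikovSuperAlgebra

variable {V : Type*} [AddCommGroup V] [Module ℂ V] (N : NovikovSuperAlgebra V)

def associator (m : V →ₗ[ℂ] V →ₗ[ℂ] V) (z : V) : V →ₗ[ℂ] V →ₗ[ℂ] V :=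
  m.compr₂ (m.flip z) - m.compl₂ (m.flip z)

@[simp]
theorem associator_apply (m : V →ₗ[ℂ] V →ₗ[ℂ] V) (z x y : V) :
    associator m z x y = m (m x y) z - m x (m y z) := rfl

def leftMulMul (m : V →ₗ[ℂ] V →ₗ[ℂ] V) (z : V) : V →ₗ[ℂ] V →ₗ[ℂ] V :=
  m.comp (m z)

@[simp]
theorem leftMulMul_apply (m : V →ₗ[ℂ] V →ₗ[ℂ] V) (z x y : V) :
    leftMulMul m z x y = m (m z x) y := rfl

theorem apply_comm_of_homogeneous {W : Type*} [AddCommGroup W] [Module ℂ W]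
    (B : V →ₗ[ℂ] V →ₗ[ℂ] W)
    (hB : ∀ i j : ZMod 2, ∀ u ∈ N.grading i, ∀ v ∈ N.grading j, B u v = B v u) (x y : V) :
    B x y = B y x := by
  obtain ⟨x₀, hx₀, x₁, hx₁, rfl⟩ := N.spanning x
  obtain ⟨y₀, hy₀, y₁, hy₁, rfl⟩ := N.spanning y
  simp only [map_add, LinearMap.add_apply, hB 0 0 x₀ hx₀ y₀ hy₀, hB 0 1 x₀ hx₀ y₁ hy₁,
    hB 1 0 x₁ hx₁ y₀ hy₀, hB 1 1 x₁ hx₁ y₁ hy₁]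
  abel

theorem apply_comm_of_finrank_odd_le_one [FiniteDimensional ℂ (N.grading 1)]
    (hodd : finrank ℂ (N.grading 1) ≤ 1) {W : Type*} [AddCommGroup W] [Module ℂ W]
    (B : V →ₗ[ℂ] V →ₗ[ℂ] W)
    (hB : ∀ i j : ZMod 2, ∀ u ∈ N.grading i, ∀ v ∈ N.grading j,
      B u v = (-1 : ℂ) ^ (i.val * j.val) • B v u) (x y : V) :
    B x y = B y x := by
  refine N.apply_comm_of_homogeneous B (fun i j u hu v hv => ?_) x y
  by_cases hij : i = 1 ∧ j = 1
  · obtain ⟨rfl, rfl⟩ := hij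
    exact B.apply_comm_of_mem_of_finrank_le_one hodd hu hv
  · rw [hB i j u hu v hv, ZMod.neg_one_pow_val_mul_val_eq_one hij, one_smul]

theorem isNovikovMul_of_finrank_odd_le_one [FiniteDimensional ℂ (N.grading 1)]
    (hodd : finrank ℂ (N.grading 1) ≤ 1) : IsNovikovMul N.mul := by
  refine ⟨fun x y z => ?_, fun x y z => ?_⟩
  · simpa using N.apply_comm_of_finrank_odd_le_one hodd (associator N.mul z)
      (fun i j u hu v hv => by simpa using N.super_left_sym i j u hu v hv z) x y
  · simpa using N.apply_comm_of_finrank_odd_le_one hodd (leftMulMul N.mul z)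
      (fun i j u hu v hv => by simpa using N.super_right_comm i j u hu v hv z) x y

theorem grading_zero_eq_bot_of_grading_one_eq_top (h : N.grading 1 = ⊤) :
    N.grading 0 = ⊥ :=
  (Submodule.eq_bot_iff _).mpr fun x hx => N.indep x hx (h ▸ Submodule.mem_top)

theorem mul_eq_zero_of_grading_zero_eq_bot (h : N.grading 0 = ⊥) : N.mul = 0 := by
  have hodd : ∀ x : V, x ∈ N.grading 1 := fun x => by
    obtain ⟨x₀, hx₀, x₁, hx₁, rfl⟩ := N.spanning x
    rw [h, Submodule.mem_bot] at hx₀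
    rwa [hx₀, zero_add]
  ext x y
  have := N.mul_mem 1 1 x (hodd x) y (hodd y)
  rwa [show (1 + 1 : ZMod 2) = 0 from rfl, h, Submodule.mem_bot] at this

end NovikovSuperAlgebra

/-- a 3-dimensional Novikov superalgebra of type S has `dim A₁ = 2`. -/
theorem dim3_type_S_odd_dim_two {V : Type*} [AddCommGroup V] [Module ℂ V]
    [FiniteDimensional ℂ V] (hdim : Module.finrank ℂ V = 3)
    (N : NovikovSuperAlgebra V) (h : ¬ IsNovikovMul N.mul) :
    Module.finrank ℂ (N.grading 1) = 2 := by
  have hle : finrank ℂ (N.grading 1) ≤ 3 := hdim ▸ Submodule.finrank_le _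
  obtain hodd | hodd | hodd : finrank ℂ (N.grading 1) ≤ 1 ∨
      finrank ℂ (N.grading 1) = 2 ∨ finrank ℂ (N.grading 1) = 3 := by omega
  · exact absurd (N.isNovikovMul_of_finrank_odd_le_one hodd) h
  · exact hodd
  · have htop : N.grading 1 = ⊤ := Submodule.eq_top_of_finrank_eq (hodd.trans hdim.symm)
    have hmul := N.mul_eq_zero_of_grading_zero_eq_bot
      (N.grading_zero_eq_bot_of_grading_one_eq_top htop)
    exact absurd (hmul ▸ isNovikovMul_zero) h
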